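/- arXiv:1402.4867 — 2 statements merged into one kernel-verified Lean document; each statement's English description precedes it below -/
import Mathlib

section
/- Let π be a permutation of {1,…,n}, let d : {1,…,n} → ℤ satisfy ∑_{i=1}^n d(i) = 0 and π(i) + d(i) ≡ i (mod n) for every i, and let Q be any finite sequence of cyclically adjacent swaps that sorts π and has net clockwise displacement vector d. Then for all distinct i, j: if π(i) < π(j), c(i,j) = 1 + max{ m ∈ ℤ : π(i) + d(i) > π(j) + d(j) + m·n }, and if π(i) > π(j), c(i,j) = max{ m ∈ ℤ : π(i) + d(i) > π(j) + d(j) + m·n }. -/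
/-- Applying the swap `q = (i, j)` to `π`: elements `i` and `j` exchange positions
(element `i` moves clockwise, element `j` moves counterclockwise). -/
def applySwap {n : ℕ} (π : Equiv.Perm (Fin n)) (q : Fin n × Fin n) : Equiv.Perm (Fin n) :=
  π.trans (Equiv.swap (π q.1) (π q.2))

/-- `q = (i, j)` is a cyclically adjacent swap for `π`: element `j` occupies the
position cyclically following the position of element `i` (positions mod `n`). -/
def IsCycSwap {n : ℕ} [NeZero n] (π : Equiv.Perm (Fin n)) (q : Fin n × Fin n) : Prop :=
  π q.2 = π q.1 + 1

/-- `Q` is a valid sequence of cyclically adjacent swaps for `π`: each swap is a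
cyclically adjacent swap for the permutation obtained by performing the previous swaps. -/
def IsSwapSeq {n : ℕ} [NeZero n] : Equiv.Perm (Fin n) → List (Fin n × Fin n) → Prop
  | _, [] => True
  | π, q :: Q => IsCycSwap π q ∧ IsSwapSeq (applySwap π q) Q

/-- The permutation resulting from applying the swaps of `Q` in order to `π`. -/
def applySwaps {n : ℕ} (π : Equiv.Perm (Fin n)) (Q : List (Fin n × Fin n)) :
    Equiv.Perm (Fin n) :=
  Q.foldl applySwap π

/-- `c(i,j)`: the number of times the swap `(i,j)` occurs in `Q` minus the number of
times the swap `(j,i)` occurs in `Q`. -/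
def swapCount {n : ℕ} (Q : List (Fin n × Fin n)) (i j : Fin n) : ℤ :=
  (Q.count (i, j) : ℤ) - (Q.count (j, i) : ℤ)

/-- `d(i) = ∑_{j ≠ i} c(i,j)`: the net clockwise displacement of element `i`. -/
def netDisp {n : ℕ} (Q : List (Fin n × Fin n)) (i : Fin n) : ℤ :=
  ∑ j ∈ Finset.univ.erase i, swapCount Q i j

/-! For distinct elements `i` and `j`, follow the clockwise distance `g ∈ (0, n)` from the
position of `j` to the position of `i`. A swap in which `i` or `j` passes a third element
changes `g` by the net clockwise move of `i` minus that of `j`; the swaps `(i, j)` and `(j, i)`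
change it by `2 - n` and `n - 2`, i.e. they also wrap around once. Hence
`g + c(i,j)·n - d(i) + d(j)` is invariant along the sequence. Comparing its initial and final
values, with the final `g` strictly between `0` and `n`, pins down `c(i,j)` as the largest `m`
with `π(j) + d(j) + m·n < π(i) + d(i)`, shifted by one when `π(i) < π(j)`. -/

open Equiv

lemma Fin.intCast_val_sub {n : ℕ} (a b : Fin n) :
    (((a - b : Fin n) : ℕ) : ℤ) = (a : ℤ) - b + if a < b then n else 0 := by
  have := b.isLt
  split_ifs with h
  · rw [Fin.coe_sub_iff_lt.mpr h]; omega
  · rw [Fin.sub_val_of_le (not_lt.mp h)]; simp only [not_lt, Fin.le_def] at h; omega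

lemma Fin.intCast_val_sub_swap_add_one {n : ℕ} [NeZero n] {a b p : Fin n} (hab : a ≠ b) :
    (((swap p (p + 1) a - swap p (p + 1) b : Fin n) : ℕ) : ℤ)
      + ((if a = p ∧ b = p + 1 then 1 else 0) - (if b = p ∧ a = p + 1 then 1 else 0)) * n
      = ((a - b : Fin n) : ℕ) + ((if a = p then 1 else 0) - (if a = p + 1 then 1 else 0))
        - ((if b = p then 1 else 0) - (if b = p + 1 then 1 else 0)) := by
  obtain ⟨m, rfl⟩ := Nat.exists_eq_add_one_of_ne_zero (NeZero.ne n)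
  have hp := Fin.val_add_one p
  simp only [Fin.ext_iff, Fin.val_last] at hp
  generalize p + 1 = p' at hp ⊢
  have := a.isLt; have := b.isLt; have := p.isLt; have := p'.isLt
  rw [swap_apply_def, swap_apply_def]
  split_ifs at * <;> simp only [Fin.intCast_val_sub, Fin.ext_iff, Fin.lt_def] at * <;>
    split_ifs at * <;> omega

lemma isGreatest_setOf_add_mul_lt {a b k r n : ℤ} (h : a = b + k * n + r) (hr : 0 < r)
    (hrn : r < n) : IsGreatest {m : ℤ | b + m * n < a} k := by
  refine ⟨show b + k * n < a by linarith, fun m (hm : b + m * n < a) => ?_⟩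
  have : m * n < (k + 1) * n := by linarith
  exact Int.lt_add_one_iff.mp (lt_of_mul_lt_mul_right this (by linarith))

section

variable {n : ℕ}

lemma swapCount_append (Q₁ Q₂ : List (Fin n × Fin n)) (i j : Fin n) :
    swapCount (Q₁ ++ Q₂) i j = swapCount Q₁ i j + swapCount Q₂ i j := by
  simp only [swapCount, List.count_append]; push_cast; ring

lemma netDisp_append (Q₁ Q₂ : List (Fin n × Fin n)) (i : Fin n) :
    netDisp (Q₁ ++ Q₂) i = netDisp Q₁ i + netDisp Q₂ i := by
  simp only [netDisp, swapCount_append, Finset.sum_add_distrib]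

lemma swapCount_singleton (q : Fin n × Fin n) (i j : Fin n) :
    swapCount [q] i j = (if q.1 = i ∧ q.2 = j then 1 else 0)
      - (if q.1 = j ∧ q.2 = i then 1 else 0) := by
  simp only [swapCount, List.count_singleton, beq_iff_eq, Prod.ext_iff]
  push_cast; rfl

lemma netDisp_singleton {q : Fin n × Fin n} (hq : q.1 ≠ q.2) (i : Fin n) :
    netDisp [q] i = (if q.1 = i then 1 else 0) - (if q.2 = i then 1 else 0) := by
  simp only [netDisp, swapCount_singleton, Finset.sum_sub_distrib, ite_and]
  congr 1 <;> split_ifs with h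
  · simp [h ▸ hq.symm]
  · simp
  · simp [h ▸ hq]
  · simp

def cycGap (σ : Perm (Fin n)) (i j : Fin n) : ℤ :=
  ((σ i - σ j : Fin n) : ℕ)

lemma cycGap_lt (σ : Perm (Fin n)) (i j : Fin n) : cycGap σ i j < n := by
  unfold cycGap
  exact_mod_cast (σ i - σ j).isLt

variable [NeZero n]

lemma cycGap_pos {σ : Perm (Fin n)} {i j : Fin n} (hij : i ≠ j) : 0 < cycGap σ i j := by
  have : σ i - σ j ≠ 0 := sub_ne_zero.mpr (σ.injective.ne hij)
  unfold cycGap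
  exact_mod_cast Nat.pos_of_ne_zero (Fin.val_ne_zero_iff.mpr this)

lemma IsCycSwap.cycGap_applySwap {π : Perm (Fin n)} {q : Fin n × Fin n} (hq : IsCycSwap π q)
    {i j : Fin n} (hij : i ≠ j) :
    cycGap (applySwap π q) i j + swapCount [q] i j * n
      = cycGap π i j + netDisp [q] i - netDisp [q] j := by
  have hn : 2 ≤ n := Fin.nontrivial_iff_two_le.mp ⟨⟨i, j, hij⟩⟩
  have hq12 : q.1 ≠ q.2 := fun h => by simp [IsCycSwap, h] at hq; omega
  have hmove : ∀ x, applySwap π q x = swap (π q.1) (π q.1 + 1) (π x) := fun x => by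
    rw [← hq]; rfl
  have hfst : ∀ x, q.1 = x ↔ π x = π q.1 := fun x => by rw [eq_comm, π.injective.eq_iff]
  have hsnd : ∀ x, q.2 = x ↔ π x = π q.1 + 1 := fun x => by
    rw [← hq, eq_comm, π.injective.eq_iff]
  rw [cycGap, cycGap, hmove, hmove, swapCount_singleton, netDisp_singleton hq12,
    netDisp_singleton hq12]
  simp only [hfst, hsnd]
  exact Fin.intCast_val_sub_swap_add_one (π.injective.ne hij)

lemma IsSwapSeq.cycGap_applySwaps {π : Perm (Fin n)} {Q : List (Fin n × Fin n)}
    (hQ : IsSwapSeq π Q) {i j : Fin n} (hij : i ≠ j) :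
    cycGap (applySwaps π Q) i j + swapCount Q i j * n
      = cycGap π i j + netDisp Q i - netDisp Q j := by
  induction Q generalizing π with
  | nil => simp [applySwaps, swapCount, netDisp]
  | cons q Q ih =>
    have hstep := hQ.1.cycGap_applySwap hij
    have hrest := ih hQ.2
    simp only [applySwaps, List.foldl_cons] at hrest ⊢
    rw [← List.singleton_append, swapCount_append, netDisp_append, netDisp_append]
    linarith

end

theorem swapCount_formula_general (n : ℕ) [NeZero n] (π : Equiv.Perm (Fin n))
    (d : Fin n → ℤ)
    (Q : List (Fin n × Fin n)) (hQ : IsSwapSeq π Q)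
    (hd : ∀ i, netDisp Q i = d i) :
    ∀ i j : Fin n, i ≠ j → ∀ M : ℤ,
      IsGreatest {m : ℤ | ((π j : ℕ) : ℤ) + d j + m * n < ((π i : ℕ) : ℤ) + d i} M →
      swapCount Q i j = if π i < π j then 1 + M else M := by
  intro i j hij M hM
  have hinv := hQ.cycGap_applySwaps hij
  have hstart : cycGap π i j = (π i : ℤ) - π j + if π i < π j then n else 0 :=
    Fin.intCast_val_sub _ _
  rw [hd, hd] at hinv
  have hk := isGreatest_setOf_add_mul_lt
    (a := ((π i : ℕ) : ℤ) + d i) (b := ((π j : ℕ) : ℤ) + d j)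
    (k := swapCount Q i j - if π i < π j then 1 else 0) ?_
    (cycGap_pos (σ := applySwaps π Q) hij) (cycGap_lt _ i j)
  · rw [hM.unique hk]; split_ifs <;> ring
  · split_ifs at hstart ⊢ <;> push_cast at hstart <;> linarith

/-- Jerrum's formula: for any sequence of cyclically adjacent swaps sorting `π` with
net displacement vector `d`, the net swap count `c(i,j)` equals
`1 + max{m : π(i)+d(i) > π(j)+d(j)+m·n}` if `π(i) < π(j)`, and
`max{m : π(i)+d(i) > π(j)+d(j)+m·n}` if `π(i) > π(j)`. -/
theorem swapCount_formula (n : ℕ) [NeZero n] (π : Equiv.Perm (Fin n))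
    (d : Fin n → ℤ) (hsum : ∑ i, d i = 0)
    (hcong : ∀ i : Fin n, ((π i : ℕ) : ℤ) + d i ≡ ((i : ℕ) : ℤ) [ZMOD (n : ℤ)])
    (Q : List (Fin n × Fin n)) (hQ : IsSwapSeq π Q) (hsort : applySwaps π Q = 1)
    (hd : ∀ i, netDisp Q i = d i) :
    ∀ i j : Fin n, i ≠ j → ∀ M : ℤ,
      IsGreatest {m : ℤ | ((π j : ℕ) : ℤ) + d j + m * n < ((π i : ℕ) : ℤ) + d i} M →
      swapCount Q i j = if π i < π j then 1 + M else M :=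
  swapCount_formula_general n π d Q hQ hd
end

section
/- Let π be a permutation of {1,…,n} and let Q be any finite sequence of cyclically adjacent swaps applied to π whose net clockwise displacement vector d satisfies d(i) − d(j) ≤ n for all i, j. Then for any two distinct elements i, j with d(i) ≥ d(j): (a) 0 ≤ c(i,j) ≤ 1; (b) if d(i) = d(j) then c(i,j) = 0; (c) if d(i) − d(j) = n then c(i,j) = 1. -/
/-!
Lift positions from `ℤ/nℤ` to `ℤ`: if `D ≡ π(i) - π(j) (mod n)`, then after the swaps the gap
between `i` and `j` is represented by `D + d(i) - d(j)`. A swap `(i,j)` or `(j,i)` moves this lifted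
gap by `±2` across a multiple of `n`, and every other swap moves it by at most `1` without ever
reaching a multiple of `n`, since `i` and `j` never share a position. Hence
`c(i,j) = ⌊(D + d(i) - d(j)) / n⌋ - ⌊D / n⌋`, and the three claims follow from
`0 ≤ d(i) - d(j) ≤ n`.
-/

theorem Int.ediv_add_eq_ediv_of_not_dvd {n D e : ℤ} (hn : 0 < n) (he : |e| ≤ 1)
    (hD : ¬ n ∣ D) (hDe : ¬ n ∣ D + e) : (D + e) / n = D / n := by
  have hdecomp := Int.mul_ediv_add_emod D n
  have hr : D % n ≠ 0 := fun h => hD (Int.dvd_of_emod_eq_zero h)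
  have hrn : D % n + e ≠ n := fun h => hDe ⟨D / n + 1, by linarith⟩
  have hr_nonneg := Int.emod_nonneg D hn.ne'
  have hr_lt := Int.emod_lt_of_pos D hn
  rw [abs_le] at he
  rw [show D + e = (D % n + e) + n * (D / n) by linarith, Int.add_mul_ediv_left _ _ hn.ne',
    Int.ediv_eq_zero_of_lt (by omega) (by omega), zero_add]

theorem Int.add_two_ediv_of_dvd_add_one {n D : ℤ} (hn : 1 < n) (h : n ∣ D + 1) :
    (D + 2) / n = D / n + 1 := by
  obtain ⟨k, hk⟩ := h
  rw [show D + 2 = 1 + n * k by linarith, show D = (n - 1) + n * (k - 1) by linarith,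
    Int.add_mul_ediv_left _ _ (by omega), Int.add_mul_ediv_left _ _ (by omega),
    Int.ediv_eq_zero_of_lt (by omega) hn, Int.ediv_eq_zero_of_lt (by omega) (by omega)]
  ring

variable {n : ℕ}

theorem swapCount_cons (q : Fin n × Fin n) (Q : List (Fin n × Fin n)) (i j : Fin n) :
    swapCount (q :: Q) i j = swapCount [q] i j + swapCount Q i j := by
  simp only [swapCount, List.count_cons, List.count_nil]
  push_cast
  ring

theorem netDisp_cons (q : Fin n × Fin n) (Q : List (Fin n × Fin n)) (i : Fin n) :
    netDisp (q :: Q) i = netDisp [q] i + netDisp Q i := by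
  simp only [netDisp, ← Finset.sum_add_distrib]
  exact Finset.sum_congr rfl fun j _ => swapCount_cons q Q i j

theorem netDisp_singleton_s11 {a b : Fin n} (hab : a ≠ b) (x : Fin n) :
    netDisp [(a, b)] x = if x = a then 1 else if x = b then -1 else 0 := by
  unfold netDisp swapCount
  split_ifs with ha hb
  · rw [Finset.sum_eq_single b] <;> grind [List.count_singleton]
  · rw [Finset.sum_eq_single a] <;> grind [List.count_singleton]
  · exact Finset.sum_eq_zero fun j _ => by grind [List.count_singleton]

section CycSwap

open Fin.CommRing

variable [NeZero n] {π : Equiv.Perm (Fin n)} {q : Fin n × Fin n}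

theorem IsCycSwap.fst_ne_snd [Nontrivial (Fin n)] (hq : IsCycSwap π q) : q.1 ≠ q.2 := by
  intro h
  have : π q.1 = π q.1 + 1 := (congrArg π h).trans hq
  exact one_ne_zero (left_eq_add.mp this)

theorem IsCycSwap.applySwap_apply (hq : IsCycSwap π q) (hne : q.1 ≠ q.2) (x : Fin n) :
    applySwap π q x = π x + (netDisp [q] x : Fin n) := by
  obtain ⟨a, b⟩ := q
  have hq : π b = π a + 1 := hq
  rw [netDisp_singleton_s11 hne, applySwap, Equiv.trans_apply]
  split_ifs with ha hb
  · simp [ha, hq]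
  · simp [hb, hq]
  · simp [Equiv.swap_apply_of_ne_of_ne, π.injective.ne, ha, hb]

theorem IsCycSwap.intCast_add_netDisp_sub [Nontrivial (Fin n)] (hq : IsCycSwap π q)
    {i j : Fin n} {D : ℤ} (hD : (D : Fin n) = π i - π j) :
    ((D + (netDisp [q] i - netDisp [q] j) : ℤ) : Fin n) = applySwap π q i - applySwap π q j := by
  rw [hq.applySwap_apply hq.fst_ne_snd, hq.applySwap_apply hq.fst_ne_snd]
  push_cast
  rw [hD]
  ring

theorem not_dvd_of_intCast_eq_sub (σ : Equiv.Perm (Fin n)) {i j : Fin n} (hij : i ≠ j) {D : ℤ}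
    (hD : (D : Fin n) = σ i - σ j) : ¬ (n : ℤ) ∣ D := by
  rw [← CharP.intCast_eq_zero_iff (Fin n) n, hD, sub_eq_zero]
  exact σ.injective.ne hij

theorem IsCycSwap.swapCount_singleton_eq (hq : IsCycSwap π q) {i j : Fin n} (hij : i ≠ j)
    {D : ℤ} (hD : (D : Fin n) = π i - π j) :
    swapCount [q] i j = (D + (netDisp [q] i - netDisp [q] j)) / n - D / n := by
  have : Nontrivial (Fin n) := ⟨⟨i, j, hij⟩⟩
  have hn : (1 : ℤ) < n := by have := Fin.nontrivial_iff_two_le.mp this; omega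
  have hndvd := not_dvd_of_intCast_eq_sub π hij hD
  have hndvd' := not_dvd_of_intCast_eq_sub _ hij (hq.intCast_add_netDisp_sub hD)
  have hne := hq.fst_ne_snd
  obtain ⟨a, b⟩ := q
  have hq : π b = π a + 1 := hq
  simp only [netDisp_singleton_s11 hne] at hndvd' ⊢
  by_cases hfwd : (a, b) = (i, j)
  · obtain ⟨rfl, rfl⟩ := Prod.mk.inj hfwd
    have : (n : ℤ) ∣ D + 1 := by
      rw [← CharP.intCast_eq_zero_iff (Fin n) n]
      push_cast
      rw [hD, hq]
      ring
    simp [swapCount, hij, hij.symm, Int.add_two_ediv_of_dvd_add_one hn this]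
  by_cases hbwd : (a, b) = (j, i)
  · obtain ⟨rfl, rfl⟩ := Prod.mk.inj hbwd
    have : (n : ℤ) ∣ D - 2 + 1 := by
      rw [← CharP.intCast_eq_zero_iff (Fin n) n]
      push_cast
      rw [hD, hq]
      ring
    have := Int.add_two_ediv_of_dvd_add_one hn this
    rw [sub_add_cancel] at this
    simp [swapCount, hij, hij.symm, ← sub_eq_add_neg]
    linarith
  have hzero : swapCount [(a, b)] i j = 0 := by
    simp [swapCount, hfwd, hbwd]
  have he : |(if i = a then 1 else if i = b then -1 else 0) -
      (if j = a then 1 else if j = b then -1 else 0)| ≤ (1 : ℤ) := by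
    rw [abs_le]
    split_ifs <;> grind
  rw [hzero, Int.ediv_add_eq_ediv_of_not_dvd (by omega) he hndvd hndvd', sub_self]

theorem IsSwapSeq.swapCount_eq_ediv_sub_ediv {Q : List (Fin n × Fin n)} (hQ : IsSwapSeq π Q)
    {i j : Fin n} (hij : i ≠ j) {D : ℤ} (hD : (D : Fin n) = π i - π j) :
    swapCount Q i j = (D + (netDisp Q i - netDisp Q j)) / n - D / n := by
  have : Nontrivial (Fin n) := ⟨⟨i, j, hij⟩⟩
  induction Q generalizing π D with
  | nil => simp [swapCount, netDisp]
  | cons q Q ih =>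
    obtain ⟨hq, hQ⟩ := hQ
    rw [swapCount_cons, netDisp_cons q Q i, netDisp_cons q Q j, hq.swapCount_singleton_eq hij hD,
      ih hQ (hq.intCast_add_netDisp_sub hD)]
    ring_nf

theorem IsSwapSeq.exists_swapCount_eq {Q : List (Fin n × Fin n)} (hQ : IsSwapSeq π Q)
    {i j : Fin n} (hij : i ≠ j) :
    ∃ D : ℤ, swapCount Q i j = (D + (netDisp Q i - netDisp Q j)) / n - D / n :=
  ⟨(π i : ℕ) - (π j : ℕ), hQ.swapCount_eq_ediv_sub_ediv hij (by push_cast; simp)⟩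

end CycSwap

/-- Properties of the net swap counts of a sequence of cyclically adjacent swaps whose
net displacement vector satisfies `d(i) - d(j) ≤ n` for all `i, j`:
for distinct `i, j` with `d(i) ≥ d(j)`, (a) `0 ≤ c(i,j) ≤ 1`, (b) `d(i) = d(j)`
implies `c(i,j) = 0`, and (c) `d(i) - d(j) = n` implies `c(i,j) = 1`. -/
theorem swapCount_properties (n : ℕ) [NeZero n] (π : Equiv.Perm (Fin n))
    (Q : List (Fin n × Fin n)) (hQ : IsSwapSeq π Q)
    (hopt : ∀ i j : Fin n, netDisp Q i - netDisp Q j ≤ (n : ℤ))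
    (i j : Fin n) (hij : i ≠ j) (hge : netDisp Q j ≤ netDisp Q i) :
    (0 ≤ swapCount Q i j ∧ swapCount Q i j ≤ 1) ∧
      (netDisp Q i = netDisp Q j → swapCount Q i j = 0) ∧
      (netDisp Q i - netDisp Q j = (n : ℤ) → swapCount Q i j = 1) := by
  obtain ⟨D, hc⟩ := hQ.exists_swapCount_eq hij
  have hn : (0 : ℤ) < n := by exact_mod_cast NeZero.pos n
  have hshift : (D + n) / n = D / n + 1 := by
    rw [Int.add_ediv_of_dvd_right dvd_rfl, Int.ediv_self hn.ne']
  have hlo := Int.ediv_le_ediv hn (show D ≤ D + (netDisp Q i - netDisp Q j) by linarith)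
  have hhi := Int.ediv_le_ediv hn (show D + (netDisp Q i - netDisp Q j) ≤ D + n by
    linarith [hopt i j])
  refine ⟨⟨by omega, by omega⟩, fun h => ?_, fun h => ?_⟩
  · rw [hc, h, sub_self, add_zero, sub_self]
  · rw [hc, h, hshift, add_sub_cancel_left]
end
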